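/- For every integer a ≥ 1, every λ ∈ [0,1) and every t with 0 < t < 1: | ∑_{j=0}^{a−1} exp(−4t sin²(π(j+λ)/a)) − a e^{−2t} I₀(2t) | ≤ 2a e^{−2t} I₀(2t) · t^a/(1 − t^a). -/

import Mathlib

/-!
With `θ_j = 2π(j+λ)/a` we have `-4t sin²(θ_j/2) = -2t + t e^{iθ_j} + t e^{-iθ_j}`, so multiplying
the exponential series of `t e^{±iθ_j}` gives
`exp(-4t sin²(θ_j/2)) = e^{-2t} ∑_{p,q} e^{i(p-q)θ_j} t^{p+q}/(p! q!)`.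
After summing over `j`, the coefficient `∑_j e^{i(p-q)θ_j}` has modulus at most `a` and vanishes
unless `a ∣ p - q`. The diagonal `p = q` gives exactly `a e^{-2t} I₀(2t)`. Off the diagonal,
`p = q + a(k+1)` (or symmetrically), and `p! ≥ q!` bounds the term by `t^{a(k+1)}` times the
diagonal term at `q`; summing the geometric series in `k` gives `t^a/(1-t^a)` for each half.
-/

open Real Filter

/-- Modified Bessel function of the first kind of integer order `m`,
`I_m(t) = ∑_{j=0}^∞ (t/2)^{2j+|m|} / (j! (j+|m|)!)`. -/
noncomputable def besselI (m : ℤ) (t : ℝ) : ℝ :=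
  ∑' j : ℕ, (t / 2) ^ (2 * j + m.natAbs) /
    ((Nat.factorial j : ℝ) * (Nat.factorial (j + m.natAbs) : ℝ))

lemma summable_norm_pow_div_factorial {𝕂 : Type*} [RCLike 𝕂] (x : 𝕂) :
    Summable fun n : ℕ => ‖x ^ n / n.factorial‖ := by
  simpa [norm_pow, norm_div] using Real.summable_pow_div_factorial ‖x‖

lemma Complex.exp_mul_exp_eq_tsum (x y : ℂ) :
    Complex.exp x * Complex.exp y =
      ∑' pq : ℕ × ℕ, x ^ pq.1 / pq.1.factorial * (y ^ pq.2 / pq.2.factorial) := by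
  rw [Complex.exp_eq_exp_ℂ, NormedSpace.exp_eq_tsum_div]
  exact tsum_mul_tsum_of_summable_norm (summable_norm_pow_div_factorial x)
    (summable_norm_pow_div_factorial y)

noncomputable def expProdCoeff (t : ℝ) (pq : ℕ × ℕ) : ℝ :=
  t ^ (pq.1 + pq.2) / (pq.1.factorial * pq.2.factorial)

lemma expProdCoeff_nonneg {t : ℝ} (ht : 0 ≤ t) (pq : ℕ × ℕ) : 0 ≤ expProdCoeff t pq := by
  unfold expProdCoeff; positivity

lemma expProdCoeff_comm (t : ℝ) (p q : ℕ) : expProdCoeff t (q, p) = expProdCoeff t (p, q) := by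
  rw [expProdCoeff, expProdCoeff, add_comm, mul_comm]

lemma expProdCoeff_add_le {t : ℝ} (ht : 0 ≤ t) (q d : ℕ) :
    expProdCoeff t (q + d, q) ≤ expProdCoeff t (q, q) * t ^ d := by
  have hfac : (q.factorial : ℝ) ≤ (q + d).factorial := by
    exact_mod_cast Nat.factorial_le (Nat.le_add_right q d)
  calc expProdCoeff t (q + d, q) = t ^ (q + q) * t ^ d / ((q + d).factorial * q.factorial) := by
        rw [expProdCoeff, add_right_comm, pow_add]
    _ ≤ t ^ (q + q) * t ^ d / (q.factorial * q.factorial) := by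
        gcongr
    _ = expProdCoeff t (q, q) * t ^ d := by
        rw [expProdCoeff, mul_div_right_comm]

lemma summable_norm_expProdCoeff (t : ℝ) : Summable fun pq => ‖expProdCoeff t pq‖ := by
  refine ((summable_norm_pow_div_factorial t).mul_norm
    (summable_norm_pow_div_factorial t)).congr fun pq => ?_
  rw [expProdCoeff, pow_add, mul_div_mul_comm]

lemma besselI_zero_two_mul (t : ℝ) : besselI 0 (2 * t) = ∑' n, expProdCoeff t (n, n) := by
  refine tsum_congr fun n => ?_
  simp [expProdCoeff, two_mul]

lemma exp_neg_four_mul_sin_sq_eq_tsum (t θ : ℝ) :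
    ((Real.exp (-4 * t * Real.sin (θ / 2) ^ 2) : ℝ) : ℂ) = Real.exp (-2 * t) *
      ∑' pq : ℕ × ℕ, Complex.exp (((((pq.1 : ℤ) - pq.2 : ℤ) * θ : ℝ) : ℂ) * Complex.I) *
        expProdCoeff t pq := by
  have hcos : -4 * t * Real.sin (θ / 2) ^ 2 = -2 * t + 2 * t * Real.cos θ := by
    rw [Real.sin_sq_eq_half_sub, show 2 * (θ / 2) = θ by ring]; ring
  have hsplit : ((2 * t * Real.cos θ : ℝ) : ℂ) =
      t * Complex.exp (θ * Complex.I) + t * Complex.exp (-(θ * Complex.I)) := by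
    push_cast [Complex.cos, neg_mul]
    ring
  rw [hcos, Complex.ofReal_exp, Complex.ofReal_add, Complex.exp_add, hsplit, Complex.exp_add,
    Complex.exp_mul_exp_eq_tsum, ← Complex.ofReal_exp]
  congr 1
  refine tsum_congr fun pq => ?_
  have hphase : Complex.exp (((((pq.1 : ℤ) - pq.2 : ℤ) * θ : ℝ) : ℂ) * Complex.I) =
      Complex.exp (pq.1 * (θ * Complex.I)) * Complex.exp (pq.2 * -(θ * Complex.I)) := by
    rw [← Complex.exp_add]
    congr 1
    push_cast
    ring
  rw [mul_pow, mul_pow, ← Complex.exp_nat_mul, ← Complex.exp_nat_mul, hphase, expProdCoeff]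
  push_cast
  ring

noncomputable def twistedRootSum (a : ℕ) (lam : ℝ) (m : ℤ) : ℂ :=
  ∑ j ∈ Finset.range a, Complex.exp (((m * (2 * π * (j + lam) / a) : ℝ) : ℂ) * Complex.I)

lemma twistedRootSum_zero (a : ℕ) (lam : ℝ) : twistedRootSum a lam 0 = a := by
  simp [twistedRootSum]

lemma norm_twistedRootSum_le (a : ℕ) (lam : ℝ) (m : ℤ) : ‖twistedRootSum a lam m‖ ≤ a := by
  refine (norm_sum_le _ _).trans_eq ?_
  simp_rw [Complex.norm_exp_ofReal_mul_I]
  simp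

lemma twistedRootSum_eq_zero_of_not_dvd {a : ℕ} (lam : ℝ) {m : ℤ} (hm : ¬ (a : ℤ) ∣ m) :
    twistedRootSum a lam m = 0 := by
  rcases eq_or_ne a 0 with rfl | ha
  · simp [twistedRootSum]
  set ω := Complex.exp (2 * π * Complex.I / a) with hω_def
  have hω : IsPrimitiveRoot ω a := Complex.isPrimitiveRoot_exp a ha
  have hterm : ∀ j : ℕ, Complex.exp (((m * (2 * π * (j + lam) / a) : ℝ) : ℂ) * Complex.I) =
      Complex.exp (((m * (2 * π * lam / a)) : ℝ) * Complex.I) * (ω ^ m) ^ j := by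
    intro j
    rw [hω_def, ← Complex.exp_int_mul, ← Complex.exp_nat_mul, ← Complex.exp_add]
    congr 1
    push_cast
    ring
  have hζ : ω ^ m ≠ 1 := fun h => hm ((hω.zpow_eq_one_iff_dvd m).mp h)
  have hζa : (ω ^ m) ^ a = 1 := by
    rw [← zpow_natCast, ← zpow_mul, mul_comm m, zpow_mul, zpow_natCast, hω.pow_eq_one, one_zpow]
  simp_rw [twistedRootSum, hterm, ← Finset.mul_sum, geom_sum_eq hζ, hζa, sub_self, zero_div,
    mul_zero]

lemma sum_exp_neg_four_mul_sin_sq_eq_tsum (a : ℕ) (lam t : ℝ) :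
    ((∑ j ∈ Finset.range a, Real.exp (-4 * t * Real.sin (π * ((j : ℝ) + lam) / a) ^ 2) : ℝ) : ℂ) =
      Real.exp (-2 * t) *
        ∑' pq : ℕ × ℕ, twistedRootSum a lam ((pq.1 : ℤ) - pq.2) * expProdCoeff t pq := by
  have hw := summable_norm_expProdCoeff t
  have hsummable : ∀ θ : ℝ, Summable fun pq : ℕ × ℕ =>
      Complex.exp (((((pq.1 : ℤ) - pq.2 : ℤ) * θ : ℝ) : ℂ) * Complex.I) * expProdCoeff t pq :=
    fun θ => Summable.of_norm_bounded hw fun pq => by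
      rw [norm_mul, Complex.norm_exp_ofReal_mul_I, Complex.norm_real, one_mul]
  have hterm : ∀ j : ℕ, ((Real.exp (-4 * t * Real.sin (π * ((j : ℝ) + lam) / a) ^ 2) : ℝ) : ℂ) =
      Real.exp (-2 * t) * ∑' pq : ℕ × ℕ,
        Complex.exp (((((pq.1 : ℤ) - pq.2 : ℤ) * (2 * π * (j + lam) / a) : ℝ) : ℂ) * Complex.I) *
          expProdCoeff t pq := fun j => by
    rw [show π * (j + lam) / a = 2 * π * (j + lam) / a / 2 by ring]
    exact exp_neg_four_mul_sin_sq_eq_tsum t _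
  rw [Complex.ofReal_sum, Finset.sum_congr rfl fun j _ => hterm j, ← Finset.mul_sum,
    ← Summable.tsum_finsetSum fun j _ => hsummable _]
  simp only [twistedRootSum, Finset.sum_mul]

lemma hasSum_pow_mul_succ {a : ℕ} {t : ℝ} (ha : 0 < a) (ht0 : 0 ≤ t) (ht1 : t < 1) :
    HasSum (fun k : ℕ => t ^ (a * (k + 1))) (t ^ a / (1 - t ^ a)) := by
  have hgeom := (hasSum_geometric_of_lt_one (pow_nonneg ht0 a) (pow_lt_one₀ ht0 ht1 ha.ne')).mul_left (t ^ a)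
  have hterm : (fun k : ℕ => t ^ (a * (k + 1))) = fun k => t ^ a * (t ^ a) ^ k := by
    ext k; ring
  rwa [hterm, div_eq_mul_inv]

def upperMultiplePairs (a : ℕ) : Set (ℕ × ℕ) := {pq | pq.2 < pq.1 ∧ (a : ℤ) ∣ pq.1 - pq.2}

lemma upperMultiplePairs_subset_range {a : ℕ} :
    upperMultiplePairs a ⊆ Set.range fun qk : ℕ × ℕ => (qk.1 + a * (qk.2 + 1), qk.1) := by
  rintro ⟨p, q⟩ ⟨hlt, c, hc⟩
  have hc_pos : 0 < c := by
    by_contra! h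
    nlinarith [mul_nonpos_of_nonneg_of_nonpos (Int.natCast_nonneg a) h]
  lift c to ℕ using hc_pos.le
  refine ⟨(q, c - 1), Prod.ext ?_ rfl⟩
  have : c - 1 + 1 = c := by omega
  simp only [this]
  have hsum : (q : ℤ) + a * c = p := by linarith
  exact_mod_cast hsum

lemma tsum_indicator_upperMultiplePairs_le {a : ℕ} {t : ℝ} (ha : 0 < a) (ht0 : 0 ≤ t)
    (ht1 : t < 1) :
    ∑' pq, (upperMultiplePairs a).indicator (expProdCoeff t) pq ≤
      (∑' n, expProdCoeff t (n, n)) * (t ^ a / (1 - t ^ a)) := by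
  set e : ℕ × ℕ → ℕ × ℕ := fun qk => (qk.1 + a * (qk.2 + 1), qk.1)
  have he : Function.Injective e := by
    rintro ⟨q, k⟩ ⟨q', k'⟩ h
    simp only [e, Prod.mk.injEq] at h
    obtain ⟨h1, rfl⟩ := h
    simpa [ha.ne'] using h1
  have hsupp : Function.support ((upperMultiplePairs a).indicator (expProdCoeff t)) ⊆ Set.range e :=
    Set.support_indicator_subset.trans upperMultiplePairs_subset_range
  have hw := (summable_norm_expProdCoeff t).of_norm
  have hdiag : Summable fun n => expProdCoeff t (n, n) :=
    hw.comp_injective Function.diag_injective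
  have hgeom := hasSum_pow_mul_succ ha ht0 ht1
  have hprod : Summable fun qk : ℕ × ℕ => expProdCoeff t (qk.1, qk.1) * t ^ (a * (qk.2 + 1)) :=
    Summable.mul_of_nonneg (f := fun n => expProdCoeff t (n, n)) (g := fun k => t ^ (a * (k + 1)))
      hdiag hgeom.summable (fun n => expProdCoeff_nonneg ht0 _) fun k => pow_nonneg ht0 _
  rw [← he.tsum_eq hsupp, ← hgeom.tsum_eq, hdiag.tsum_mul_tsum hgeom.summable hprod]
  refine Summable.tsum_le_tsum (fun qk => ?_) ((he.summable_iff ?_).mpr (hw.indicator _)) hprod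
  · obtain ⟨q, k⟩ := qk
    have hmem : e (q, k) ∈ upperMultiplePairs a :=
      ⟨by simp [e, ha], k + 1, by simp only [e]; push_cast; ring⟩
    rw [Set.indicator_of_mem hmem]
    exact expProdCoeff_add_le ht0 _ _
  · exact fun pq hpq => Function.notMem_support.mp fun h => hpq (hsupp h)

section OffDiagonal

variable {a : ℕ} {t C : ℝ} {R : ℤ → ℂ}

lemma norm_indicator_compl_diagonal_le (ht0 : 0 ≤ t) (hR : ∀ m, ‖R m‖ ≤ C)
    (hR_dvd : ∀ m, ¬ (a : ℤ) ∣ m → R m = 0) (pq : ℕ × ℕ) :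
    ‖(Set.diagonal ℕ)ᶜ.indicator (fun pq => R ((pq.1 : ℤ) - pq.2) * expProdCoeff t pq) pq‖ ≤
      C * ((upperMultiplePairs a).indicator (expProdCoeff t) pq +
        (upperMultiplePairs a).indicator (expProdCoeff t) pq.swap) := by
  obtain ⟨p, q⟩ := pq
  have hC : 0 ≤ C := (norm_nonneg _).trans (hR 0)
  have hG : ∀ pq, 0 ≤ (upperMultiplePairs a).indicator (expProdCoeff t) pq :=
    Set.indicator_nonneg fun pq _ => expProdCoeff_nonneg ht0 pq
  have hRHS := mul_nonneg hC (add_nonneg (hG (p, q)) (hG (q, p)))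
  by_cases hpq : p = q
  · simpa [hpq] using hRHS
  by_cases hdvd : (a : ℤ) ∣ p - q
  swap
  · simpa [hpq, hR_dvd _ hdvd] using hRHS
  have hw_le : expProdCoeff t (p, q) ≤ (upperMultiplePairs a).indicator (expProdCoeff t) (p, q) +
      (upperMultiplePairs a).indicator (expProdCoeff t) (q, p) := by
    rcases Nat.lt_or_gt_of_ne hpq with hlt | hgt
    · rw [Set.indicator_of_mem (show (q, p) ∈ upperMultiplePairs a from ⟨hlt, dvd_sub_comm.mp hdvd⟩),
        expProdCoeff_comm]
      exact le_add_of_nonneg_left (hG _)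
    · rw [Set.indicator_of_mem (show (p, q) ∈ upperMultiplePairs a from ⟨hgt, hdvd⟩)]
      exact le_add_of_nonneg_right (hG _)
  rw [Set.indicator_of_mem (show (p, q) ∈ (Set.diagonal ℕ)ᶜ from hpq), norm_mul,
    Complex.norm_real, Real.norm_of_nonneg (expProdCoeff_nonneg ht0 _)]
  exact mul_le_mul (hR _) hw_le (expProdCoeff_nonneg ht0 _) hC

lemma norm_tsum_sub_diagonal_le (ha : 0 < a) (ht0 : 0 ≤ t) (ht1 : t < 1)
    (hR : ∀ m, ‖R m‖ ≤ C) (hR_dvd : ∀ m, ¬ (a : ℤ) ∣ m → R m = 0) :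
    ‖∑' pq : ℕ × ℕ, R ((pq.1 : ℤ) - pq.2) * expProdCoeff t pq -
        R 0 * (∑' n, expProdCoeff t (n, n) : ℝ)‖ ≤
      2 * C * (∑' n, expProdCoeff t (n, n)) * (t ^ a / (1 - t ^ a)) := by
  set F : ℕ × ℕ → ℂ := fun pq => R ((pq.1 : ℤ) - pq.2) * expProdCoeff t pq with hF_def
  set G := (upperMultiplePairs a).indicator (expProdCoeff t)
  have hw := summable_norm_expProdCoeff t
  have hF : Summable F := by
    refine Summable.of_norm_bounded (hw.mul_left C) fun pq => ?_
    rw [hF_def, norm_mul, Complex.norm_real]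
    exact mul_le_mul_of_nonneg_right (hR _) (norm_nonneg _)
  have hdiag : ∑' pq, (Set.diagonal ℕ).indicator F pq = R 0 * (∑' n, expProdCoeff t (n, n) : ℝ) := by
    rw [← Function.diag_injective.tsum_eq (Set.support_indicator_subset.trans Set.range_diag.ge)]
    simp [F, Function.diag, Set.indicator_of_mem, tsum_mul_left, Complex.ofReal_tsum]
  have hsplit : ∑' pq, F pq = ∑' pq, (Set.diagonal ℕ).indicator F pq +
      ∑' pq, (Set.diagonal ℕ)ᶜ.indicator F pq := by
    rw [← (hF.indicator _).tsum_add (hF.indicator _)]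
    simp only [Set.indicator_self_add_compl_apply]
  have hG : Summable G := hw.of_norm.indicator _
  have hG_swap : HasSum (fun pq : ℕ × ℕ => G pq.swap) (∑' pq, G pq) :=
    ((Equiv.prodComm ℕ ℕ).hasSum_iff.mpr hG.hasSum)
  rw [hsplit, hdiag, add_sub_cancel_left]
  calc ‖∑' pq, (Set.diagonal ℕ)ᶜ.indicator F pq‖ ≤ C * (∑' pq, G pq + ∑' pq, G pq) :=
        tsum_of_norm_bounded ((hG.hasSum.add hG_swap).mul_left C)
          (norm_indicator_compl_diagonal_le ht0 hR hR_dvd)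
    _ = 2 * C * ∑' pq, G pq := by ring
    _ ≤ 2 * C * ((∑' n, expProdCoeff t (n, n)) * (t ^ a / (1 - t ^ a))) := by
        have hC : 0 ≤ C := (norm_nonneg _).trans (hR 0)
        gcongr
        exact tsum_indicator_upperMultiplePairs_le ha ht0 ht1
    _ = 2 * C * (∑' n, expProdCoeff t (n, n)) * (t ^ a / (1 - t ^ a)) := by ring

end OffDiagonal

theorem theta_bessel_comparison_general
    (a : ℕ) (ha : 1 ≤ a) (lam : ℝ)
    (t : ℝ) (ht : 0 < t) (ht1 : t < 1) :
    |(∑ j ∈ Finset.range a,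
        Real.exp (-4 * t * Real.sin (π * ((j : ℝ) + lam) / (a : ℝ)) ^ 2))
      - (a : ℝ) * Real.exp (-2 * t) * besselI 0 (2 * t)|
      ≤ 2 * (a : ℝ) * Real.exp (-2 * t) * besselI 0 (2 * t) * (t ^ a / (1 - t ^ a)) := by
  have hdiff : (((∑ j ∈ Finset.range a,
        Real.exp (-4 * t * Real.sin (π * ((j : ℝ) + lam) / (a : ℝ)) ^ 2))
      - (a : ℝ) * Real.exp (-2 * t) * besselI 0 (2 * t) : ℝ) : ℂ) =
      Real.exp (-2 * t) * (∑' pq : ℕ × ℕ, twistedRootSum a lam ((pq.1 : ℤ) - pq.2) *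
        expProdCoeff t pq - twistedRootSum a lam 0 * (∑' n, expProdCoeff t (n, n) : ℝ)) := by
    rw [Complex.ofReal_sub, sum_exp_neg_four_mul_sin_sq_eq_tsum, twistedRootSum_zero,
      besselI_zero_two_mul]
    push_cast
    ring
  have hoff := norm_tsum_sub_diagonal_le ha ht.le ht1 (norm_twistedRootSum_le a lam)
    fun _ => twistedRootSum_eq_zero_of_not_dvd lam
  rw [← Real.norm_eq_abs, ← Complex.norm_real, hdiff, norm_mul, Complex.norm_real,
    Real.norm_of_nonneg (Real.exp_pos _).le, besselI_zero_two_mul]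
  calc _ ≤ Real.exp (-2 * t) * (2 * a * (∑' n, expProdCoeff t (n, n)) * (t ^ a / (1 - t ^ a))) := by
        gcongr
    _ = _ := by ring

/-- Comparison of the twisted discrete-circle theta function with `a e^{−2t} I₀(2t)`:
`|θ(t) − a e^{−2t} I₀(2t)| ≤ 2a e^{−2t} I₀(2t) t^a/(1−t^a)` for `0 < t < 1`. -/
theorem theta_bessel_comparison
    (a : ℕ) (ha : 1 ≤ a) (lam : ℝ) (hlam : lam ∈ Set.Ico (0 : ℝ) 1)
    (t : ℝ) (ht : 0 < t) (ht1 : t < 1) :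
    |(∑ j ∈ Finset.range a,
        Real.exp (-4 * t * Real.sin (π * ((j : ℝ) + lam) / (a : ℝ)) ^ 2))
      - (a : ℝ) * Real.exp (-2 * t) * besselI 0 (2 * t)|
      ≤ 2 * (a : ℝ) * Real.exp (-2 * t) * besselI 0 (2 * t) * (t ^ a / (1 - t ^ a)) :=
  theta_bessel_comparison_general a ha lam t ht ht1
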